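/- Let Q(a) = {x ∈ ℝⁿ : ⟨xᵢ*, x⟩ ≤ αᵢ for i = 1..k, ⟨xᵢ*, x⟩ = αᵢ for i = k+1..m}, where a = (α₁,...,α_m). Given fixed vectors x₁*,...,x_m* ∈ ℝⁿ, there exists a constant K > 0, depending only on the xᵢ*, such that d(x, Q(a)) ≤ K ( Σ_{i=1}^{k} (⟨xᵢ*, x⟩ − αᵢ)⁺ + Σ_{i=k+1}^{m} |⟨xᵢ*, x⟩ − αᵢ| ) for all x ∈ ℝⁿ and all a ∈ ℝᵐ with Q(a) ≠ ∅. -/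

import Mathlib

/-!
Let `y` be the point of `Q` nearest to `x` and `v = x - y`. Then `v` lies in the normal cone of `Q`
at `y`, which by Farkas' lemma is the closure of the cone spanned by the normals `wⱼ` of the
constraints active at `y`. By Carathéodory, each point `u` of that cone is a nonnegative
combination of a linearly independent subfamily of the `wⱼ`, with coefficients at most `K ‖u‖`,
where `K` bounds the inverses of the finitely many injective maps `μ ↦ ∑ μᵢ wᵢ`. For active `j`,
`⟪wⱼ, v⟫ = ⟪wⱼ, x⟫ - bⱼ` is at most the residual of constraint `j`, so `⟪u, v⟫ ≤ K ‖u‖ ρ` with `ρ`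
the sum of the residuals; this passes to the closure by continuity, and `u = v` gives `‖v‖ ≤ K ρ`.
Equalities are encoded as pairs of opposite inequalities.
-/

open scoped RealInnerProductSpace

/-- The polyhedral set `Q(a)` defined by the linear inequalities
`⟨cᵢ, x⟩ ≤ aᵢ` for `i < k` and equalities `⟨cᵢ, x⟩ = aᵢ` for `k ≤ i`. -/
def Qset (n m k : ℕ) (c : Fin m → EuclideanSpace ℝ (Fin n)) (a : Fin m → ℝ) :
    Set (EuclideanSpace ℝ (Fin n)) :=
  {x | (∀ i : Fin m, (i : ℕ) < k → ⟪c i, x⟫ ≤ a i) ∧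
       (∀ i : Fin m, k ≤ (i : ℕ) → ⟪c i, x⟫ = a i)}

open Finset Filter Topology

section Caratheodory

variable {ι 𝕜 M : Type*} [Field 𝕜] [LinearOrder 𝕜] [IsStrictOrderedRing 𝕜]
  [AddCommGroup M] [Module 𝕜 M] [DecidableEq ι]

/- A relation `∑ gᵢ • wᵢ = 0` with some `gᵢ > 0` lets us subtract the largest multiple of `g`
that keeps the coefficients nonnegative; this kills at least one of them. -/
lemma exists_erase_nonneg_sum_eq_of_not_linearIndepOn {w : ι → M} {t : Finset ι}
    (hdep : ¬LinearIndepOn 𝕜 w (t : Set ι)) {lam : ι → 𝕜} (hlam : ∀ i ∈ t, 0 ≤ lam i) :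
    ∃ i₀ ∈ t, ∃ lam' : ι → 𝕜, (∀ i ∈ t, 0 ≤ lam' i) ∧
      ∑ i ∈ t.erase i₀, lam' i • w i = ∑ i ∈ t, lam i • w i := by
  obtain ⟨f, hf, i₁, hi₁, hfi₁⟩ := not_linearIndepOn_finset_iff.mp hdep
  set g : ι → 𝕜 := fun i => f i / f i₁
  have hg : ∑ i ∈ t, g i • w i = 0 := by
    simp only [g, div_eq_inv_mul, mul_smul, ← smul_sum, hf, smul_zero]
  have hP : (t.filter (0 < g ·)).Nonempty := ⟨i₁, mem_filter.mpr ⟨hi₁, by simp [g, hfi₁]⟩⟩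
  obtain ⟨i₀, hi₀, hmin⟩ := (t.filter (0 < g ·)).exists_min_image (fun i => lam i / g i) hP
  rw [mem_filter] at hi₀
  set r := lam i₀ / g i₀
  have hr : 0 ≤ r := div_nonneg (hlam i₀ hi₀.1) hi₀.2.le
  refine ⟨i₀, hi₀.1, fun i => lam i - r * g i, fun i hi => ?_, ?_⟩
  · rcases le_or_gt (g i) 0 with hgi | hgi
    · nlinarith [hlam i hi]
    · rw [sub_nonneg, ← le_div_iff₀ hgi]
      exact hmin i (mem_filter.mpr ⟨hi, hgi⟩)
  · rw [sum_erase _ (by simp [r, div_mul_cancel₀ _ hi₀.2.ne'])]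
    simp only [sub_smul, mul_smul, sum_sub_distrib, ← smul_sum, hg, smul_zero, sub_zero]

/-- Carathéodory's theorem for cones. -/
lemma exists_linearIndepOn_nonneg_sum_eq (w : ι → M) (t : Finset ι) (lam : ι → 𝕜)
    (hlam : ∀ i ∈ t, 0 ≤ lam i) :
    ∃ s ⊆ t, LinearIndepOn 𝕜 w (s : Set ι) ∧ ∃ μ : ι → 𝕜, (∀ i ∈ s, 0 ≤ μ i) ∧
      ∑ i ∈ s, μ i • w i = ∑ i ∈ t, lam i • w i := by
  induction t using Finset.strongInduction generalizing lam with
  | _ t ih =>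
  by_cases hind : LinearIndepOn 𝕜 w (t : Set ι)
  · exact ⟨t, subset_rfl, hind, lam, hlam, rfl⟩
  obtain ⟨i₀, hi₀, lam', hlam', hsum⟩ := exists_erase_nonneg_sum_eq_of_not_linearIndepOn hind hlam
  obtain ⟨s, hs, hsind, μ, hμ, hμsum⟩ :=
    ih _ (erase_ssubset hi₀) lam' fun i hi => hlam' i (mem_of_mem_erase hi)
  exact ⟨s, hs.trans (erase_subset _ _), hsind, μ, hμ, hμsum.trans hsum⟩

end Caratheodory

section CoefficientBound

variable {ι E : Type*} [Fintype ι] [NormedAddCommGroup E] [NormedSpace ℝ E]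

lemma exists_abs_le_mul_norm_sum_of_linearIndepOn (w : ι → E) :
    ∃ K > 0, ∀ s : Finset ι, LinearIndepOn ℝ w (s : Set ι) →
      ∀ μ : ι → ℝ, ∀ i ∈ s, |μ i| ≤ K * ‖∑ j ∈ s, μ j • w j‖ := by
  have hanti : ∀ s : Finset ι, ∃ K : NNReal, LinearIndepOn ℝ w (s : Set ι) →
      AntilipschitzWith K (Fintype.linearCombination ℝ (fun i : s => w i)) := fun s => by
    by_cases hs : LinearIndepOn ℝ w (s : Set ι)
    · obtain ⟨K, -, hK⟩ := (Fintype.linearCombination ℝ (fun i : s => w i)).exists_antilipschitzWith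
        (LinearMap.ker_eq_bot.mpr (linearIndependent_iff_injective_fintypeLinearCombination.mp hs))
      exact ⟨K, fun _ => hK⟩
    · exact ⟨0, fun h => absurd h hs⟩
  choose K hK using hanti
  obtain ⟨K₀, hK₀⟩ := Finite.exists_le fun s => (K s : ℝ)
  refine ⟨max K₀ 1, by positivity, fun s hs μ i hi => ?_⟩
  have h := (hK s hs).le_mul_dist (fun j : s => μ j) 0
  simp only [dist_zero_right, map_zero, Fintype.linearCombination_apply,
    sum_coe_sort s (fun j => μ j • w j)] at h
  calc |μ i| ≤ ‖fun j : s => μ j‖ := norm_le_pi_norm (fun j : s => μ j) ⟨i, hi⟩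
    _ ≤ K s * ‖∑ j ∈ s, μ j • w j‖ := h
    _ ≤ max K₀ 1 * ‖∑ j ∈ s, μ j • w j‖ := by
      gcongr
      exact (hK₀ s).trans (le_max_left _ _)

lemma exists_nonneg_coeff_le_mul_norm_of_mem_hull (w : ι → E) :
    ∃ K > 0, ∀ (T : Set ι) (u : E), u ∈ PointedCone.hull ℝ (w '' T) →
      ∃ s : Finset ι, ↑s ⊆ T ∧ ∃ μ : ι → ℝ, (∀ i ∈ s, 0 ≤ μ i ∧ μ i ≤ K * ‖u‖) ∧
        ∑ i ∈ s, μ i • w i = u := by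
  classical
  obtain ⟨K, hK, hbound⟩ := exists_abs_le_mul_norm_sum_of_linearIndepOn w
  refine ⟨K, hK, fun T u hu => ?_⟩
  obtain ⟨l, hlT, rfl⟩ := (Finsupp.mem_span_image_iff_linearCombination _).mp hu
  obtain ⟨s, hsl, hsind, μ, hμ, hsum⟩ :=
    exists_linearIndepOn_nonneg_sum_eq w l.support (fun i => (l i : ℝ)) fun i _ => (l i).2
  have hu : ∑ i ∈ s, μ i • w i = Finsupp.linearCombination _ w l := by
    simp only [hsum, Finsupp.linearCombination_apply, Finsupp.sum, Nonneg.coe_smul]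
  refine ⟨s, (coe_subset.mpr hsl).trans hlT, μ, fun i hi => ⟨hμ i hi, ?_⟩, hu⟩
  rw [← hu]
  exact (le_abs_self _).trans (hbound s hsind μ i hi)

end CoefficientBound

section Farkas

variable {E : Type*} [NormedAddCommGroup E] [InnerProductSpace ℝ E] [CompleteSpace E]

lemma mem_closure_hull_of_forall_inner_nonneg {s : Set E} {v : E}
    (hv : ∀ d, (∀ u ∈ s, 0 ≤ ⟪u, d⟫) → 0 ≤ ⟪v, d⟫) :
    v ∈ closure (PointedCone.hull ℝ s : Set E) := by
  rw [← Submodule.coe_closure]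
  by_contra hvC
  obtain ⟨d, hd, hvd⟩ := ProperCone.hyperplane_separation' _ hvC
  exact hvd.not_ge (hv d fun u hu => hd u (subset_closure (PointedCone.subset_hull hu)))

end Farkas

section Polyhedron

variable {ι E : Type*} [NormedAddCommGroup E] [InnerProductSpace ℝ E]

def polyhedron (w : ι → E) (b : ι → ℝ) : Set E := ⋂ j, {x | ⟪w j, x⟫ ≤ b j}

lemma isClosed_polyhedron (w : ι → E) (b : ι → ℝ) : IsClosed (polyhedron w b) :=
  isClosed_iInter fun j => isClosed_le (by fun_prop) continuous_const

lemma convex_polyhedron (w : ι → E) (b : ι → ℝ) : Convex ℝ (polyhedron w b) :=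
  convex_iInter fun j => convex_halfSpace_le (innerₛₗ ℝ (w j)).isLinear (b j)

lemma eventually_add_smul_mem_polyhedron [Finite ι] {w : ι → E} {b : ι → ℝ} {y d : E}
    (hy : y ∈ polyhedron w b) (hd : ∀ j, ⟪w j, y⟫ = b j → ⟪w j, d⟫ ≤ 0) :
    ∀ᶠ ε in 𝓝[>] (0 : ℝ), y + ε • d ∈ polyhedron w b := by
  simp only [polyhedron, Set.mem_iInter, Set.mem_ofPred_eq, eventually_all] at hy ⊢
  intro j
  rcases (hy j).eq_or_lt with hj | hj
  · filter_upwards [self_mem_nhdsWithin] with ε (hε : 0 < ε)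
    rw [inner_add_right, real_inner_smul_right]
    nlinarith [hd j hj]
  · have hcont : Continuous fun ε : ℝ => ⟪w j, y + ε • d⟫ := by fun_prop
    have hlim : Tendsto (fun ε : ℝ => ⟪w j, y + ε • d⟫) (𝓝[>] 0) (𝓝 ⟪w j, y⟫) := by
      simpa using (hcont.tendsto 0).mono_left nhdsWithin_le_nhds
    exact (hlim.eventually (gt_mem_nhds hj)).mono fun _ h => h.le

lemma mem_closure_hull_active_of_forall_inner_le_zero [Finite ι] [CompleteSpace E]
    {w : ι → E} {b : ι → ℝ} {y v : E}
    (hy : y ∈ polyhedron w b) (hv : ∀ z ∈ polyhedron w b, ⟪v, z - y⟫ ≤ 0) :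
    v ∈ closure (PointedCone.hull ℝ (w '' {j | ⟪w j, y⟫ = b j}) : Set E) := by
  refine mem_closure_hull_of_forall_inner_nonneg fun d hd => ?_
  have hd' : ∀ j, ⟪w j, y⟫ = b j → ⟪w j, -d⟫ ≤ 0 := fun j hj => by
    rw [inner_neg_right, neg_nonpos]
    exact hd _ ⟨j, hj, rfl⟩
  obtain ⟨ε, hεQ, hε⟩ :=
    ((eventually_add_smul_mem_polyhedron hy hd').and self_mem_nhdsWithin).exists
  have h := hv _ hεQ
  rw [add_sub_cancel_left, real_inner_smul_right, inner_neg_right] at h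
  nlinarith

theorem exists_infDist_polyhedron_le [Fintype ι] [CompleteSpace E] (w : ι → E) :
    ∃ K > 0, ∀ b : ι → ℝ, (polyhedron w b).Nonempty → ∀ x : E,
      Metric.infDist x (polyhedron w b) ≤ K * ∑ j, max (⟪w j, x⟫ - b j) 0 := by
  obtain ⟨K, hK, hcoeff⟩ := exists_nonneg_coeff_le_mul_norm_of_mem_hull w
  refine ⟨K, hK, fun b hQ x => ?_⟩
  set R := ∑ j, max (⟪w j, x⟫ - b j) 0
  obtain ⟨y, hy, hxy⟩ := exists_norm_eq_iInf_of_complete_convex hQ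
    (isClosed_polyhedron w b).isComplete (convex_polyhedron w b) x
  have hnormal := mem_closure_hull_active_of_forall_inner_le_zero hy
    ((norm_eq_iInf_iff_real_inner_le_zero (convex_polyhedron w b) hy).mp hxy)
  have hcone : ∀ u ∈ PointedCone.hull ℝ (w '' {j | ⟪w j, y⟫ = b j}),
      ⟪u, x - y⟫ ≤ K * ‖u‖ * R := by
    intro u hu
    obtain ⟨s, hsT, μ, hμ, hsum⟩ := hcoeff _ u hu
    calc ⟪u, x - y⟫ = ∑ i ∈ s, μ i * (⟪w i, x⟫ - b i) := by
          rw [← hsum, sum_inner]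
          refine sum_congr rfl fun i hi => ?_
          rw [real_inner_smul_left, inner_sub_right, show ⟪w i, y⟫ = b i from hsT hi]
      _ ≤ ∑ i ∈ s, K * ‖u‖ * max (⟪w i, x⟫ - b i) 0 := sum_le_sum fun i hi =>
          (mul_le_mul_of_nonneg_left (le_max_left _ _) (hμ i hi).1).trans
            (mul_le_mul_of_nonneg_right (hμ i hi).2 (le_max_right _ _))
      _ ≤ K * ‖u‖ * R := by
          rw [← mul_sum]
          gcongr
          exact sum_le_sum_of_subset_of_nonneg (subset_univ s) fun _ _ _ => le_max_right _ _
  have hv : ⟪x - y, x - y⟫ ≤ K * ‖x - y‖ * R :=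
    closure_minimal (t := {u | ⟪u, x - y⟫ ≤ K * ‖u‖ * R}) hcone
      (isClosed_le (continuous_id.inner continuous_const)
        ((continuous_const.mul continuous_norm).mul continuous_const)) hnormal
  rw [real_inner_self_eq_norm_mul_norm, mul_right_comm] at hv
  calc Metric.infDist x (polyhedron w b) ≤ ‖x - y‖ :=
        (Metric.infDist_le_dist_of_mem hy).trans_eq (dist_eq_norm x y)
    _ ≤ K * R := by
        rcases (norm_nonneg (x - y)).eq_or_lt with h | h
        · rw [← h]; positivity
        · exact le_of_mul_le_mul_right hv h

end Polyhedron

namespace Qset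

variable {E : Type*} [NormedAddCommGroup E] [InnerProductSpace ℝ E] {m : ℕ} (k : ℕ)

def normals (c : Fin m → E) : Fin m ⊕ {i : Fin m // k ≤ (i : ℕ)} → E :=
  Sum.elim c fun i => -c i

def bounds (a : Fin m → ℝ) : Fin m ⊕ {i : Fin m // k ≤ (i : ℕ)} → ℝ :=
  Sum.elim a fun i => -a i

lemma eq_polyhedron (n : ℕ) (c : Fin m → EuclideanSpace ℝ (Fin n)) (a : Fin m → ℝ) :
    Qset n m k c a = polyhedron (normals k c) (bounds k a) := by
  ext x
  simp only [Qset, polyhedron, normals, bounds, Set.mem_iInter, Set.mem_ofPred_eq, Sum.forall,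
    Sum.elim_inl, Sum.elim_inr, inner_neg_left, neg_le_neg_iff, Subtype.forall]
  constructor
  · rintro ⟨hlt, heq⟩
    exact ⟨fun i => (lt_or_ge (i : ℕ) k).elim (hlt i) fun h => (heq i h).le,
      fun i hi => (heq i hi).ge⟩
  · rintro ⟨hle, hge⟩
    exact ⟨fun i _ => hle i, fun i hi => le_antisymm (hle i) (hge i hi)⟩

lemma sum_max_inner_normals_sub_bounds (c : Fin m → E) (a : Fin m → ℝ) (x : E) :
    ∑ j, max (⟪normals k c j, x⟫ - bounds k a j) 0 =
      (∑ i ∈ univ.filter (fun i : Fin m => (i : ℕ) < k), max (⟪c i, x⟫ - a i) 0) +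
        ∑ i ∈ univ.filter (fun i : Fin m => k ≤ (i : ℕ)), |⟪c i, x⟫ - a i| := by
  simp only [normals, bounds, Fintype.sum_sum_type, Sum.elim_inl, Sum.elim_inr, inner_neg_left]
  rw [← sum_filter_add_sum_filter_not univ (fun i : Fin m => (i : ℕ) < k)]
  simp only [not_lt]
  rw [← sum_subtype (univ.filter fun i : Fin m => k ≤ (i : ℕ)) (by simp)
      (fun i => max (-⟪c i, x⟫ - -a i) 0), add_assoc, ← sum_add_distrib]
  congr 1
  refine sum_congr rfl fun i _ => ?_
  rw [← max_zero_add_max_neg_zero_eq_abs_self, neg_sub_neg, neg_sub]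

end Qset

theorem hoffmann_error_bound_general (n m k : ℕ)
    (c : Fin m → EuclideanSpace ℝ (Fin n)) :
    ∃ K : ℝ, 0 < K ∧ ∀ a : Fin m → ℝ, (Qset n m k c a).Nonempty →
      ∀ x : EuclideanSpace ℝ (Fin n),
        Metric.infDist x (Qset n m k c a) ≤
          K * ((∑ i ∈ Finset.univ.filter (fun i : Fin m => (i : ℕ) < k),
                  max (⟪c i, x⟫ - a i) 0) +
               (∑ i ∈ Finset.univ.filter (fun i : Fin m => k ≤ (i : ℕ)),
                  |⟪c i, x⟫ - a i|)) := by
  obtain ⟨K, hK, hbound⟩ := exists_infDist_polyhedron_le (Qset.normals k c)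
  refine ⟨K, hK, fun a hQ x => ?_⟩
  rw [Qset.eq_polyhedron] at hQ ⊢
  rw [← Qset.sum_max_inner_normals_sub_bounds]
  exact hbound _ hQ x

/-- Hoffmann's error bound: given fixed vectors `cᵢ ∈ ℝⁿ`, there is `K > 0`,
depending only on the `cᵢ`, such that
`d(x, Q(a)) ≤ K (Σ_{i<k} (⟨cᵢ,x⟩ − aᵢ)⁺ + Σ_{k≤i} |⟨cᵢ,x⟩ − aᵢ|)`
for all `x` and all `a` with `Q(a) ≠ ∅`. -/
theorem hoffmann_error_bound (n m k : ℕ) (hk : k ≤ m)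
    (c : Fin m → EuclideanSpace ℝ (Fin n)) :
    ∃ K : ℝ, 0 < K ∧ ∀ a : Fin m → ℝ, (Qset n m k c a).Nonempty →
      ∀ x : EuclideanSpace ℝ (Fin n),
        Metric.infDist x (Qset n m k c a) ≤
          K * ((∑ i ∈ Finset.univ.filter (fun i : Fin m => (i : ℕ) < k),
                  max (⟪c i, x⟫ - a i) 0) +
               (∑ i ∈ Finset.univ.filter (fun i : Fin m => k ≤ (i : ℕ)),
                  |⟪c i, x⟫ - a i|)) :=
  hoffmann_error_bound_general n m k c
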